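/- The limit as m → ∞ (with n = 4m) of 4·(∑_{k=1}^{n/4} (cos((2k-1)π/(2n-2)) − cos(kπ/(n+1))) + ∑_{k=n/4+1}^{n/2} (cos(kπ/(n+1)) − cos((2k-1)π/(2n-2)))) equals (8 − 8√2 + 2π)/π. -/

import Mathlib

/-!
Put `a = π / (2n - 2)` and `c = π / (2n + 2)`. Both sums are sums of cosines over arithmetic
progressions and telescope, and at `n = 4m` the boundary sines are sines of `π/4 + x/2` or `π/2`.
This gives the closed form `2 (φ a / sin a - φ c / sin c + tan (c/2)) + 2` with
`φ x = 2 sin (π/4 + x/2) - cos x`. Each quotient blows up like `φ 0 / x`, but `1/a - 1/c = -4/π`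
exactly and `φ x / sin x - φ 0 / x` has a limit at `0`, so the expression tends to
`2 (√2 - 1) (-4/π) + 2`.
-/

open Real Filter Finset Topology

theorem sum_Icc_cos_mul_two_sin (α β : ℝ) {p q : ℕ} (hpq : p ≤ q + 1) :
    (∑ k ∈ Icc p q, cos (α + k * β)) * (2 * sin (β / 2)) =
      sin (α + (q + 1 / 2) * β) - sin (α + (p - 1 / 2) * β) := by
  have hstep : ∀ k : ℕ, cos (α + k * β) * (2 * sin (β / 2)) =
      sin (α + ((k + 1 : ℕ) - 1 / 2) * β) - sin (α + (k - 1 / 2) * β) := by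
    intro k
    have h := two_mul_sin_mul_cos (β / 2) (α + k * β)
    push_cast
    rw [show α + ((k : ℝ) + 1 - 1 / 2) * β = α + k * β + β / 2 by ring,
      show α + ((k : ℝ) - 1 / 2) * β = α + k * β - β / 2 by ring, sin_add, sin_sub]
    ring
  rw [← Ico_add_one_right_eq_Icc, sum_mul, sum_congr rfl fun k _ => hstep k,
    sum_Ico_sub (fun k : ℕ => sin (α + (k - 1 / 2) * β)) hpq]
  push_cast
  ring_nf

theorem sum_Icc_cos_odd_mul {θ : ℝ} (hθ : sin θ ≠ 0) {p q : ℕ} (hpq : p ≤ q + 1) :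
    ∑ k ∈ Icc p q, cos ((2 * k - 1) * θ) =
      (sin (2 * q * θ) - sin (2 * (p - 1) * θ)) / (2 * sin θ) := by
  rw [eq_div_iff (mul_ne_zero two_ne_zero hθ)]
  convert sum_Icc_cos_mul_two_sin (-θ) (2 * θ) hpq using 3 <;> ring_nf

theorem sum_Icc_cos_even_mul {θ : ℝ} (hθ : sin θ ≠ 0) {p q : ℕ} (hpq : p ≤ q + 1) :
    ∑ k ∈ Icc p q, cos (k * (2 * θ)) =
      (sin ((2 * q + 1) * θ) - sin ((2 * p - 1) * θ)) / (2 * sin θ) := by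
  rw [eq_div_iff (mul_ne_zero two_ne_zero hθ)]
  convert sum_Icc_cos_mul_two_sin 0 (2 * θ) hpq using 3 <;> ring_nf

theorem sin_pi_div_pos {d : ℝ} (hd : 1 < d) : 0 < sin (π / d) :=
  sin_pos_of_pos_of_lt_pi (div_pos pi_pos (by linarith)) (div_lt_self pi_pos hd)

theorem four_mul_sum_cos_sub_eq (m : ℕ) (hm : 1 ≤ m) :
    (4 : ℝ) *
        ((∑ k ∈ Finset.Icc 1 ((4 * m) / 4),
            (Real.cos ((2 * (k : ℝ) - 1) * Real.pi / (2 * (4 * (m : ℝ)) - 2)) -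
              Real.cos ((k : ℝ) * Real.pi / (4 * (m : ℝ) + 1)))) +
          ∑ k ∈ Finset.Icc ((4 * m) / 4 + 1) ((4 * m) / 2),
            (Real.cos ((k : ℝ) * Real.pi / (4 * (m : ℝ) + 1)) -
              Real.cos ((2 * (k : ℝ) - 1) * Real.pi / (2 * (4 * (m : ℝ)) - 2)))) =
      2 * ((2 * sin (π / 4 + π / (8 * m - 2) / 2) - cos (π / (8 * m - 2))) / sin (π / (8 * m - 2))
        - (2 * sin (π / 4 + π / (8 * m + 2) / 2) - cos (π / (8 * m + 2))) / sin (π / (8 * m + 2))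
        + (1 - cos (π / (8 * m + 2))) / sin (π / (8 * m + 2))) + 2 := by
  have hm' : (1 : ℝ) ≤ m := by exact_mod_cast hm
  set a := π / (8 * m - 2) with ha
  set c := π / (8 * m + 2) with hc
  have hsa : sin a ≠ 0 := (sin_pi_div_pos (by linarith)).ne'
  have hsc : sin c ≠ 0 := (sin_pi_div_pos (by linarith)).ne'
  have ha' : π / (2 * (4 * m) - 2) = a := by rw [ha]; ring_nf
  have hc' : π / (4 * m + 1) = 2 * c := by rw [hc]; field_simp; ring
  simp only [mul_div_assoc, ha', hc']
  rw [show 4 * m / 4 = m by omega, show 4 * m / 2 = 2 * m by omega, sum_sub_distrib,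
    sum_sub_distrib, sum_Icc_cos_odd_mul hsa (by omega), sum_Icc_cos_odd_mul hsa (by omega),
    sum_Icc_cos_even_mul hsc (by omega), sum_Icc_cos_even_mul hsc (by omega)]
  have ha_mul : a * (8 * m - 2) = π := div_mul_cancel₀ _ (by linarith)
  have hc_mul : c * (8 * m + 2) = π := div_mul_cancel₀ _ (by linarith)
  have ea₁ : 2 * m * a = π / 4 + a / 2 := by linear_combination ha_mul / 4
  have ea₂ : 2 * (2 * m) * a = a + π / 2 := by linear_combination ha_mul / 2
  have ec₁ : (2 * m + 1) * c = π / 4 + c / 2 := by linear_combination hc_mul / 4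
  have ec₂ : (2 * (2 * m) + 1) * c = π / 2 := by linear_combination hc_mul / 2
  push_cast
  rw [show 2 * ((m : ℝ) + 1 - 1) = 2 * m by ring, show 2 * ((m : ℝ) + 1) - 1 = 2 * m + 1 by ring,
    ea₁, ea₂, ec₁, ec₂, sin_add_pi_div_two, sin_pi_div_two]
  simp only [sub_self, mul_zero, zero_mul, sin_zero, show (2 : ℝ) * 1 - 1 = 1 by norm_num, one_mul]
  field_simp
  ring

theorem tendsto_sin_div_self_nhdsNE : Tendsto (fun x => sin x / x) (𝓝[≠] 0) (𝓝 1) := by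
  refine (continuous_sinc.tendsto' 0 1 sinc_zero).mono_left nhdsWithin_le_nhds |>.congr' ?_
  filter_upwards [self_mem_nhdsWithin] with x hx
  exact sinc_of_ne_zero hx

theorem tendsto_sub_div_sin {f : ℝ → ℝ} {f' : ℝ} (hf : HasDerivAt f f' 0) :
    Tendsto (fun x => (f x - f 0) / sin x) (𝓝[≠] 0) (𝓝 f') := by
  have h := (hasDerivAt_iff_tendsto_slope.mp hf).div tendsto_sin_div_self_nhdsNE one_ne_zero
  rw [div_one] at h
  refine h.congr' ?_
  filter_upwards [self_mem_nhdsWithin] with x hx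
  rw [Pi.div_apply, slope_def_field, sub_zero, div_div_div_cancel_right₀ hx]

theorem abs_self_sub_sin_le {x : ℝ} (hx : |x| ≤ 1) : |x - sin x| ≤ |x| ^ 3 := by
  have h5 : |x| ^ 5 ≤ |x| ^ 3 := pow_le_pow_of_le_one (abs_nonneg x) hx (by norm_num)
  calc |x - sin x| = |x ^ 3 / 6 - (sin x - (x - x ^ 3 / 6))| := by ring_nf
    _ ≤ |x ^ 3 / 6| + |sin x - (x - x ^ 3 / 6)| := abs_sub _ _
    _ ≤ |x| ^ 3 / 6 + |x| ^ 5 / 100 := by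
        gcongr
        · rw [abs_div, abs_pow]; norm_num
        · exact sin_bound hx
    _ ≤ |x| ^ 3 := by linarith [pow_nonneg (abs_nonneg x) 3]

theorem tendsto_self_sub_sin_div_sq : Tendsto (fun x => (x - sin x) / x ^ 2) (𝓝 0) (𝓝 0) := by
  have hx : Tendsto (fun x : ℝ => |x|) (𝓝 0) (𝓝 0) := by
    simpa using (continuous_abs.tendsto (0 : ℝ))
  refine squeeze_zero_norm' ?_ hx
  filter_upwards [eventually_abs_sub_lt 0 one_pos] with x hx1
  rw [sub_zero] at hx1
  rw [norm_div, norm_pow, Real.norm_eq_abs, Real.norm_eq_abs]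
  rcases eq_or_ne x 0 with rfl | hx0
  · simp
  rw [div_le_iff₀ (by positivity)]
  calc |x - sin x| ≤ |x| ^ 3 := abs_self_sub_sin_le hx1.le
    _ = |x| * |x| ^ 2 := by ring

theorem tendsto_inv_sin_sub_inv : Tendsto (fun x => (sin x)⁻¹ - x⁻¹) (𝓝[≠] 0) (𝓝 0) := by
  have h := (tendsto_self_sub_sin_div_sq.mono_left nhdsWithin_le_nhds).div
    tendsto_sin_div_self_nhdsNE one_ne_zero
  rw [zero_div] at h
  refine h.congr' ?_
  filter_upwards [self_mem_nhdsWithin,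
    tendsto_sin_div_self_nhdsNE.eventually_ne one_ne_zero] with x (hx : x ≠ 0) hsinc
  have hsin : sin x ≠ 0 := fun h0 => hsinc (by rw [h0, zero_div])
  simp only [Pi.div_apply]
  field_simp

theorem tendsto_div_sin_sub_div_sin {ι : Type*} {l : Filter ι} {f : ℝ → ℝ}
    (hf : DifferentiableAt ℝ f 0) {a c : ι → ℝ} (ha : Tendsto a l (𝓝[≠] 0))
    (hc : Tendsto c l (𝓝[≠] 0)) {L : ℝ} (hL : Tendsto (fun i => (a i)⁻¹ - (c i)⁻¹) l (𝓝 L)) :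
    Tendsto (fun i => f (a i) / sin (a i) - f (c i) / sin (c i)) l (𝓝 (f 0 * L)) := by
  -- `f y / sin y = (f y - f 0) / sin y + f 0 * ((sin y)⁻¹ - y⁻¹) + f 0 * y⁻¹`
  have hslope := tendsto_sub_div_sin hf.hasDerivAt
  have hinv := tendsto_inv_sin_sub_inv
  have h := ((hslope.comp ha).sub (hslope.comp hc)).add
    ((((hinv.comp ha).sub (hinv.comp hc)).add hL).const_mul (f 0))
  rw [sub_self, zero_add, sub_self, zero_add] at h
  refine h.congr fun i => ?_
  simp only [Function.comp_apply]
  ring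

theorem tendsto_div_nhdsNE {ι : Type*} {l : Filter ι} {r : ℝ} (hr : r ≠ 0) {d : ι → ℝ}
    (hd : Tendsto d l atTop) : Tendsto (fun i => r / d i) l (𝓝[≠] 0) := by
  refine tendsto_nhdsWithin_iff.mpr ⟨tendsto_const_nhds.div_atTop hd, ?_⟩
  filter_upwards [hd.eventually_gt_atTop 0] with i hi
  exact div_ne_zero hr hi.ne'

theorem tendsto_pi_div_eight_mul_add (s : ℝ) :
    Tendsto (fun m : ℕ => π / (8 * m + s)) atTop (𝓝[≠] 0) :=
  tendsto_div_nhdsNE pi_ne_zero <| tendsto_atTop_add_const_right _ _ <|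
    (tendsto_natCast_atTop_atTop (R := ℝ)).const_mul_atTop (by norm_num)

theorem stmt7 :
    Tendsto (fun m : ℕ =>
      (4 : ℝ) *
        ((∑ k ∈ Finset.Icc 1 ((4 * m) / 4),
            (Real.cos ((2 * (k : ℝ) - 1) * Real.pi / (2 * (4 * (m : ℝ)) - 2)) -
              Real.cos ((k : ℝ) * Real.pi / (4 * (m : ℝ) + 1)))) +
          ∑ k ∈ Finset.Icc ((4 * m) / 4 + 1) ((4 * m) / 2),
            (Real.cos ((k : ℝ) * Real.pi / (4 * (m : ℝ) + 1)) -
              Real.cos ((2 * (k : ℝ) - 1) * Real.pi / (2 * (4 * (m : ℝ)) - 2)))))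
      atTop (nhds ((8 - 8 * Real.sqrt 2 + 2 * Real.pi) / Real.pi)) := by
  have ha : Tendsto (fun m : ℕ => π / (8 * m - 2)) atTop (𝓝[≠] 0) := by
    simpa only [sub_eq_add_neg] using tendsto_pi_div_eight_mul_add (-2)
  have hc := tendsto_pi_div_eight_mul_add 2
  have hinv : Tendsto (fun m : ℕ => (π / (8 * m - 2))⁻¹ - (π / (8 * m + 2))⁻¹) atTop
      (𝓝 (-4 / π)) :=
    tendsto_const_nhds.congr fun m => by field_simp; ring
  have hmain := tendsto_div_sin_sub_div_sin
    (f := fun x => 2 * sin (π / 4 + x / 2) - cos x) (by fun_prop) ha hc hinv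
  have htan : Tendsto (fun m : ℕ => (1 - cos (π / (8 * m + 2))) / sin (π / (8 * m + 2))) atTop
      (𝓝 0) := by
    simpa [Function.comp_def] using (tendsto_sub_div_sin ((hasDerivAt_cos 0).const_sub 1)).comp hc
  have hval : 2 * ((2 * sin (π / 4 + 0 / 2) - cos 0) * (-4 / π) + 0) + 2 =
      (8 - 8 * √2 + 2 * π) / π := by
    simp only [zero_div, add_zero, sin_pi_div_four, cos_zero]
    field_simp
    ring
  rw [← hval]
  refine (((hmain.add htan).const_mul 2).add_const 2).congr' ?_
  filter_upwards [eventually_ge_atTop 1] with m hm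
  exact (four_mul_sum_cos_sub_eq m hm).symm
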